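/- arXiv:1310.5469 — 2 statements merged into one kernel-verified Lean document; each statement's English description precedes it below -/
import Mathlib

section
/- Let G be a connected graph with a square root H. Let r ≥ 3 and let {u_1, ..., u_r} be a clique in G such that {u_1, u_2} is a minimal ({u_3, ..., u_r}, V_G ∖ {u_1, ..., u_r})-separator of G. Let {x_1, ..., x_p} = N_G(u_1) ∖ {u_1, ..., u_r} with p ≥ 1 and {y_1, ..., y_q} = N_G(u_2) ∖ {u_1, ..., u_r} with q ≥ 1. Then u_1u_2 ∈ E_H, and either (a) u_3u_1, ..., u_ru_1 ∈ E_H, u_3u_2, ..., u_ru_2 ∉ E_H, u_1x_1, ..., u_1x_p ∉ E_H, and {u_2} is a minimal ({u_1, u_3, ..., u_r}, V_H ∖ {u_1, ..., u_r})-separator of H, or (b) u_3u_1, ..., u_ru_1 ∉ E_H, u_3u_2, ..., u_ru_2 ∈ E_H, u_2y_1, ..., u_2y_q ∉ E_H, and {u_1} is a minimal ({u_2, ..., u_r}, V_H ∖ {u_1, ..., u_r})-separator of H. -/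
open SimpleGraph

variable {V : Type*}

/-- The square of a graph `H`: two distinct vertices are adjacent iff
their distance in `H` is at most `2`, i.e. they are adjacent in `H` or
have a common neighbor in `H`. -/
def squareGraph (H : SimpleGraph V) : SimpleGraph V where
  Adj a b := a ≠ b ∧ (H.Adj a b ∨ ∃ w, H.Adj a w ∧ H.Adj w b)
  symm := ⟨by
    rintro a b ⟨hne, h | ⟨w, h1, h2⟩⟩
    · exact ⟨hne.symm, Or.inl h.symm⟩
    · exact ⟨hne.symm, Or.inr ⟨w, h2.symm, h1.symm⟩⟩⟩
  loopless := ⟨by rintro a ⟨hne, -⟩; exact hne rfl⟩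

/-- `H` is a square root of `G` if `H² = G`. -/
def IsSquareRoot (H G : SimpleGraph V) : Prop := squareGraph H = G

/-- A pendant vertex: a vertex with exactly one neighbor (degree 1). -/
def IsPendant (H : SimpleGraph V) (u : V) : Prop := ∃! w, H.Adj u w

/-- The closed neighborhood of a vertex. -/
def closedNbhd (G : SimpleGraph V) (u : V) : Set V := insert u (G.neighborSet u)

/-- Two vertices are true twins if their closed neighborhoods coincide. -/
def TrueTwins (G : SimpleGraph V) (u v : V) : Prop := closedNbhd G u = closedNbhd G v

/-- `S` is an `(X,Y)`-separator of `G`: every walk in `G` from a vertex of `X`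
to a vertex of `Y` meets `S`, i.e. there is no path connecting `X` to `Y`
in the graph `G - S`. -/
def IsSep (G : SimpleGraph V) (S X Y : Set V) : Prop :=
  ∀ x ∈ X, ∀ y ∈ Y, ∀ p : G.Walk x y, ∃ s ∈ p.support, s ∈ S

/-- `S` is a minimal `(X,Y)`-separator of `G`. -/
def IsMinSep (G : SimpleGraph V) (S X Y : Set V) : Prop :=
  IsSep G S X Y ∧ ∀ S' ⊂ S, ¬ IsSep G S' X Y

/-!
Write `U = {u_1, …, u_r}`, `a = u_1`, `b = u_2` and `C = U ∖ {a, b}`. In `G = H²` no vertex of `C`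
has a neighbour outside `U`, hence in `H` no vertex at distance at most one from `C` has one.
The `G`-edge `a x_1` leaving `U` is an `H`-path of length at most two, so some `H`-edge leaves `U`
at `a` or at `b`; say at `a`. Then a vertex `c ∈ C` is not `H`-adjacent to `a`, yet at `H`-distance
two from it, and the middle vertex can only be `b`. So `C ⊆ N_H(b)`, which keeps `N_H(b)` inside
`U`, forces `ab ∈ E_H` (the alternative middle vertices all lie in `C` or outside `U`), and leaves
`a` as the only vertex through which `H`-walks can leave `U`.
-/

lemma le_squareGraph (H : SimpleGraph V) : H ≤ squareGraph H :=
  fun _ _ h => ⟨h.ne, Or.inl h⟩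

lemma squareGraph_adj_of_adj_of_adj {H : SimpleGraph V} {u v w : V}
    (huv : H.Adj u v) (hvw : H.Adj v w) (huw : u ≠ w) : (squareGraph H).Adj u w :=
  ⟨huw, Or.inr ⟨v, huv, hvw⟩⟩

lemma neighborSet_subset_of_squareGraph_neighborSet_subset {H : SimpleGraph V} {U : Set V}
    {c w : V} (hc : c ∈ U) (hcU : (squareGraph H).neighborSet c ⊆ U) (hcw : H.Adj c w) :
    H.neighborSet w ⊆ U := fun z hwz => by
  by_contra hz
  exact hz (hcU (squareGraph_adj_of_adj_of_adj hcw hwz fun hcz => hz (hcz ▸ hc)))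

lemma exists_not_neighborSet_subset_of_squareGraph_adj {H : SimpleGraph V} {U : Set V}
    {v z : V} (hv : v ∈ U) (hz : z ∉ U) (hvz : (squareGraph H).Adj v z) :
    ∃ w ∈ U, ¬ H.neighborSet w ⊆ U := by
  obtain ⟨-, h | ⟨m, hvm, hmz⟩⟩ := hvz
  · exact ⟨v, hv, fun hvU => hz (hvU h)⟩
  · by_cases hm : m ∈ U
    · exact ⟨m, hm, fun hmU => hz (hmU hmz)⟩
    · exact ⟨v, hv, fun hvU => hm (hvU hvm)⟩

lemma Fin.two_le_val_iff {n : ℕ} {i : Fin (n + 2)} : 2 ≤ (i : ℕ) ↔ i ≠ 0 ∧ i ≠ 1 := by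
  simp only [ne_eq, Fin.ext_iff, Fin.val_zero, Fin.val_one]
  omega

lemma Function.Injective.image_setOf_two_le_eq {n : ℕ} {u : Fin (n + 2) → V}
    (hu : Function.Injective u) : u '' {i | 2 ≤ (i : ℕ)} = Set.range u \ {u 0, u 1} := by
  ext v
  simp only [Set.mem_image, Set.mem_ofPred_eq, Set.mem_sdiff, Set.mem_range,
    Set.mem_insert_iff, Set.mem_singleton_iff, Fin.two_le_val_iff]
  constructor
  · rintro ⟨i, hi, rfl⟩
    exact ⟨⟨i, rfl⟩, by simpa [hu.eq_iff] using hi⟩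
  · rintro ⟨⟨i, rfl⟩, hi⟩
    exact ⟨i, by simpa [hu.eq_iff] using hi, rfl⟩

section Separator

variable {G : SimpleGraph V} {S X Y : Set V}

lemma IsSep.not_adj (h : IsSep G S X Y) {x y : V} (hx : x ∈ X) (hy : y ∈ Y) (hxS : x ∉ S)
    (hyS : y ∉ S) : ¬ G.Adj x y := fun hxy => by
  obtain ⟨s, hs, hsS⟩ := h x hx y hy hxy.toWalk
  simp only [Adj.toWalk, Walk.support_cons, Walk.support_nil, List.mem_cons,
    List.not_mem_nil, or_false] at hs
  rcases hs with rfl | rfl <;> contradiction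

lemma isSep_singleton_of_neighborSet_subset {U : Set V} {s : V}
    (hU : ∀ v ∈ U, v ≠ s → G.neighborSet v ⊆ U) (hX : X ⊆ U) : IsSep G {s} X Uᶜ := by
  intro x hx y hy p
  obtain ⟨d, hd, hdU, hdU'⟩ := p.exists_boundary_dart U (hX hx) hy
  refine ⟨d.fst, p.dart_fst_mem_support_of_mem_darts hd, ?_⟩
  by_contra hne
  exact hdU' (hU _ hdU hne d.adj)

lemma isMinSep_singleton {s x y : V} (h : IsSep G {s} X Y) (hx : x ∈ X) (hy : y ∈ Y)
    (hxy : G.Reachable x y) : IsMinSep G {s} X Y := by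
  refine ⟨h, fun S' hS' hsep' => ?_⟩
  rw [Set.ssubset_singleton_iff] at hS'
  subst hS'
  obtain ⟨p⟩ := hxy
  obtain ⟨_, _, h⟩ := hsep' x hx y hy p
  exact h

end Separator

structure IsPairSeparatedClique (G : SimpleGraph V) (U : Set V) (a b : V) : Prop where
  isClique : G.IsClique U
  left_mem : a ∈ U
  right_mem : b ∈ U
  ne : a ≠ b
  core_nonempty : (U \ {a, b}).Nonempty
  isSep : IsSep G {a, b} (U \ {a, b}) Uᶜ

namespace IsPairSeparatedClique

variable {G H : SimpleGraph V} {U X : Set V} {a b c : V}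

lemma symm (h : IsPairSeparatedClique G U a b) : IsPairSeparatedClique G U b a where
  isClique := h.isClique
  left_mem := h.right_mem
  right_mem := h.left_mem
  ne := h.ne.symm
  core_nonempty := Set.pair_comm a b ▸ h.core_nonempty
  isSep := Set.pair_comm a b ▸ h.isSep

lemma neighborSet_subset (h : IsPairSeparatedClique G U a b) (hc : c ∈ U \ {a, b}) :
    G.neighborSet c ⊆ U := fun z hcz => by
  by_contra hz
  have hzab : z ∉ ({a, b} : Set V) := by
    rintro (rfl | rfl)
    exacts [hz h.left_mem, hz h.right_mem]
  exact h.isSep.not_adj hc hz hc.2 hzab hcz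

lemma not_adj_left (h : IsPairSeparatedClique (squareGraph H) U a b)
    (hexit : ¬ H.neighborSet a ⊆ U) (hc : c ∈ U \ {a, b}) : ¬ H.Adj c a := fun hca =>
  hexit (neighborSet_subset_of_squareGraph_neighborSet_subset hc.1 (h.neighborSet_subset hc) hca)

lemma adj_right (h : IsPairSeparatedClique (squareGraph H) U a b)
    (hexit : ¬ H.neighborSet a ⊆ U) (hc : c ∈ U \ {a, b}) : H.Adj c b := by
  have hca : c ≠ a := fun hca => hc.2 (Or.inl hca)
  obtain ⟨-, hca' | ⟨w, hcw, hwa⟩⟩ := h.isClique hc.1 h.left_mem hca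
  · exact absurd hca' (h.not_adj_left hexit hc)
  · by_cases hwb : w = b
    · exact hwb ▸ hcw
    · have hw : w ∈ U \ {a, b} :=
        ⟨h.neighborSet_subset hc (le_squareGraph H hcw), by rintro (rfl | rfl) <;> simp_all⟩
      exact absurd hwa (h.not_adj_left hexit hw)

lemma neighborSet_right_subset (h : IsPairSeparatedClique (squareGraph H) U a b)
    (hexit : ¬ H.neighborSet a ⊆ U) : H.neighborSet b ⊆ U := by
  obtain ⟨c, hc⟩ := h.core_nonempty
  exact neighborSet_subset_of_squareGraph_neighborSet_subset hc.1 (h.neighborSet_subset hc)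
    (h.adj_right hexit hc)

lemma adj_left_right (h : IsPairSeparatedClique (squareGraph H) U a b)
    (hexit : ¬ H.neighborSet a ⊆ U) : H.Adj a b := by
  obtain ⟨-, hab | ⟨w, haw, hwb⟩⟩ := h.isClique h.left_mem h.right_mem h.ne
  · exact hab
  · by_cases hw : w ∈ U
    · have hw' : w ∈ U \ {a, b} := ⟨hw, by rintro (rfl | rfl) <;> simp_all⟩
      exact absurd haw.symm (h.not_adj_left hexit hw')
    · exact absurd (h.neighborSet_right_subset hexit hwb.symm) hw

lemma neighborSet_subset_of_ne_left (h : IsPairSeparatedClique (squareGraph H) U a b)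
    (hexit : ¬ H.neighborSet a ⊆ U) : ∀ v ∈ U, v ≠ a → H.neighborSet v ⊆ U := by
  intro v hv hva
  by_cases hvb : v = b
  · exact hvb ▸ h.neighborSet_right_subset hexit
  · exact (neighborSet_mono (le_squareGraph H) v).trans
      (h.neighborSet_subset ⟨hv, by rintro (rfl | rfl) <;> simp_all⟩)

lemma isMinSep_singleton_left (h : IsPairSeparatedClique (squareGraph H) U a b)
    (hexit : ¬ H.neighborSet a ⊆ U) (hX : X ⊆ U) (hbX : b ∈ X) : IsMinSep H {a} X Uᶜ := by
  obtain ⟨z, haz, hz⟩ := Set.not_subset.mp hexit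
  exact isMinSep_singleton (isSep_singleton_of_neighborSet_subset
    (h.neighborSet_subset_of_ne_left hexit) hX) hbX hz
    ((h.adj_left_right hexit).symm.reachable.trans (Adj.reachable haz))

lemma not_subset_left_or_right (h : IsPairSeparatedClique (squareGraph H) U a b) {v z : V}
    (hv : v ∈ U) (hz : z ∉ U) (hvz : (squareGraph H).Adj v z) :
    ¬ H.neighborSet a ⊆ U ∨ ¬ H.neighborSet b ⊆ U := by
  obtain ⟨w, hw, hwU⟩ := exists_not_neighborSet_subset_of_squareGraph_adj hv hz hvz
  by_cases hwab : w ∈ ({a, b} : Set V)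
  · rcases hwab with rfl | rfl
    exacts [Or.inl hwU, Or.inr hwU]
  · exact absurd ((neighborSet_mono (le_squareGraph H) w).trans
      (h.neighborSet_subset ⟨hw, hwab⟩)) hwU

end IsPairSeparatedClique

theorem minimal_separator_root_structure_general {r p q : ℕ}
    (G H : SimpleGraph V) (hH : IsSquareRoot H G)
    (u : Fin (r + 3) → V) (hu : Function.Injective u)
    (hclique : G.IsClique (Set.range u))
    (hsep : IsMinSep G {u 0, u 1} (u '' {i | 2 ≤ (i : ℕ)}) (Set.range u)ᶜ)
    (x : Fin (p + 1) → V)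
    (hxr : Set.range x = G.neighborSet (u 0) \ Set.range u)
    (y : Fin (q + 1) → V)
    (hyr : Set.range y = G.neighborSet (u 1) \ Set.range u) :
    H.Adj (u 0) (u 1) ∧
      (((∀ i : Fin (r + 3), 2 ≤ (i : ℕ) → H.Adj (u i) (u 0)) ∧
        (∀ i : Fin (r + 3), 2 ≤ (i : ℕ) → ¬ H.Adj (u i) (u 1)) ∧
        (∀ j, ¬ H.Adj (u 0) (x j)) ∧
        IsMinSep H {u 1} (insert (u 0) (u '' {i | 2 ≤ (i : ℕ)})) (Set.range u)ᶜ) ∨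
       ((∀ i : Fin (r + 3), 2 ≤ (i : ℕ) → ¬ H.Adj (u i) (u 0)) ∧
        (∀ i : Fin (r + 3), 2 ≤ (i : ℕ) → H.Adj (u i) (u 1)) ∧
        (∀ j, ¬ H.Adj (u 1) (y j)) ∧
        IsMinSep H {u 0} (u '' {i | 1 ≤ (i : ℕ)}) (Set.range u)ᶜ)) := by
  subst hH
  have hcore : ∀ i : Fin (r + 3), 2 ≤ (i : ℕ) → u i ∈ Set.range u \ {u 0, u 1} :=
    fun i hi => hu.image_setOf_two_le_eq ▸ Set.mem_image_of_mem u hi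
  have hcut : IsPairSeparatedClique (squareGraph H) (Set.range u) (u 0) (u 1) :=
    ⟨hclique, ⟨0, rfl⟩, ⟨1, rfl⟩, hu.ne (by simp), ⟨u 2, hcore 2 (Nat.mod_eq_of_lt (by omega)).ge⟩,
      hu.image_setOf_two_le_eq ▸ hsep.1⟩
  have hx0 : x 0 ∈ (squareGraph H).neighborSet (u 0) \ Set.range u := hxr ▸ ⟨0, rfl⟩
  rcases hcut.not_subset_left_or_right ⟨0, rfl⟩ hx0.2 hx0.1 with hexit | hexit
  · refine ⟨hcut.adj_left_right hexit, Or.inr ⟨fun i hi => hcut.not_adj_left hexit (hcore i hi),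
      fun i hi => hcut.adj_right hexit (hcore i hi), fun j hj => ?_,
      hcut.isMinSep_singleton_left hexit (Set.image_subset_range _ _) ⟨1, by simp, rfl⟩⟩⟩
    have hyj : y j ∈ _ \ Set.range u := hyr ▸ Set.mem_range_self j
    exact hyj.2 (hcut.neighborSet_right_subset hexit hj)
  · have hcore' : ∀ i : Fin (r + 3), 2 ≤ (i : ℕ) → u i ∈ Set.range u \ {u 1, u 0} :=
      fun i hi => Set.pair_comm (u 0) (u 1) ▸ hcore i hi
    refine ⟨(hcut.symm.adj_left_right hexit).symm,
      Or.inl ⟨fun i hi => hcut.symm.adj_right hexit (hcore' i hi),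
      fun i hi => hcut.symm.not_adj_left hexit (hcore' i hi), fun j hj => ?_,
      hcut.symm.isMinSep_singleton_left hexit
        (Set.insert_subset ⟨0, rfl⟩ (Set.image_subset_range _ _)) (Set.mem_insert _ _)⟩⟩
    have hxj : x j ∈ _ \ Set.range u := hxr ▸ Set.mem_range_self j
    exact hxj.2 (hcut.symm.neighborSet_right_subset hexit hj)

/-- Lemma 2 i). Here the paper's `u_1, ..., u_r` (`r ≥ 3`) is `u : Fin (r+3) → V`,
`x_1, ..., x_p` (`p ≥ 1`) is `x : Fin (p+1) → V`, and `y_1, ..., y_q` (`q ≥ 1`)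
is `y : Fin (q+1) → V`. -/
theorem minimal_separator_root_structure {r p q : ℕ}
    (G H : SimpleGraph V) (hG : G.Connected) (hH : IsSquareRoot H G)
    (u : Fin (r + 3) → V) (hu : Function.Injective u)
    (hclique : G.IsClique (Set.range u))
    (hsep : IsMinSep G {u 0, u 1} (u '' {i | 2 ≤ (i : ℕ)}) (Set.range u)ᶜ)
    (x : Fin (p + 1) → V) (hx : Function.Injective x)
    (hxr : Set.range x = G.neighborSet (u 0) \ Set.range u)
    (y : Fin (q + 1) → V) (hy : Function.Injective y)
    (hyr : Set.range y = G.neighborSet (u 1) \ Set.range u) :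
    H.Adj (u 0) (u 1) ∧
      (((∀ i : Fin (r + 3), 2 ≤ (i : ℕ) → H.Adj (u i) (u 0)) ∧
        (∀ i : Fin (r + 3), 2 ≤ (i : ℕ) → ¬ H.Adj (u i) (u 1)) ∧
        (∀ j, ¬ H.Adj (u 0) (x j)) ∧
        IsMinSep H {u 1} (insert (u 0) (u '' {i | 2 ≤ (i : ℕ)})) (Set.range u)ᶜ) ∨
       ((∀ i : Fin (r + 3), 2 ≤ (i : ℕ) → ¬ H.Adj (u i) (u 0)) ∧
        (∀ i : Fin (r + 3), 2 ≤ (i : ℕ) → H.Adj (u i) (u 1)) ∧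
        (∀ j, ¬ H.Adj (u 1) (y j)) ∧
        IsMinSep H {u 0} (u '' {i | 1 ≤ (i : ℕ)}) (Set.range u)ᶜ)) :=
  minimal_separator_root_structure_general G H hH u hu hclique hsep x hxr y hyr
end

section
/- Let u and v be true twins in a connected graph G with at least three vertices, and let G' be the graph obtained from G by deleting v. If H is a square root of G such that u and v are false twins in H, then the graph H' obtained from H by deleting v is a square root of G'. -/
open SimpleGraph

variable {V : Type*}

/-!
Deleting a vertex `v` can only destroy a square edge `ab` whose sole common neighbour was `v`.
If `v` has a false twin `u` in the root, then `u` is a common neighbour of `a` and `b` as well,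
so the square of `H - v` is `H² - v`.
-/

lemma squareGraph_induce_eq_induce_squareGraph {H : SimpleGraph V} {s : Set V}
    (hs : ∀ w ∉ s, ∃ w' ∈ s, H.neighborSet w ⊆ H.neighborSet w') :
    squareGraph (H.induce s) = (squareGraph H).induce s := by
  ext ⟨a, ha⟩ ⟨b, hb⟩
  simp only [squareGraph, comap_adj, Function.Embedding.coe_subtype, ne_eq, Subtype.mk.injEq,
    Subtype.exists]
  refine and_congr_right fun _ => or_congr_right ⟨?_, ?_⟩
  · rintro ⟨w, -, haw, hwb⟩
    exact ⟨w, haw, hwb⟩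
  · rintro ⟨w, haw, hwb⟩
    by_cases hw : w ∈ s
    · exact ⟨w, hw, haw, hwb⟩
    · obtain ⟨w', hw', hsub⟩ := hs w hw
      exact ⟨w', hw', (hsub haw.symm).symm, hsub hwb⟩

theorem true_twin_delete_false_twin_root_general (G : SimpleGraph V) (u v : V) (huv : u ≠ v)
    (H : SimpleGraph V) (hroot : IsSquareRoot H G)
    (hft : H.neighborSet u = H.neighborSet v) :
    IsSquareRoot (H.induce {w : V | w ≠ v}) (G.induce {w : V | w ≠ v}) := by
  subst hroot
  refine squareGraph_induce_eq_induce_squareGraph fun w hw => ⟨u, huv, ?_⟩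
  obtain rfl : w = v := not_not.mp hw
  exact hft.ge

/-- Lemma 5 ii): if `u, v` are true twins in a connected graph `G` with at least
three vertices, `H` is a square root of `G` in which `u, v` are false twins, and
`G'`, `H'` are obtained from `G`, `H` by deleting `v`, then `H'` is a square root
of `G'`. -/
theorem true_twin_delete_false_twin_root (G : SimpleGraph V) (u v : V) (huv : u ≠ v)
    (hG : G.Connected)
    (h3 : ∃ a b c : V, a ≠ b ∧ a ≠ c ∧ b ≠ c)
    (htw : TrueTwins G u v)
    (H : SimpleGraph V) (hroot : IsSquareRoot H G)
    (hft : H.neighborSet u = H.neighborSet v) :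
    IsSquareRoot (H.induce {w : V | w ≠ v}) (G.induce {w : V | w ≠ v}) :=
  true_twin_delete_false_twin_root_general G u v huv H hroot hft
end
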